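/- Suppose M: [0,∞) → [0,∞) is continuous and satisfies σ·𝓜(t) ≥ M(t)·t for all t ≥ 0 with σ > 1, where 𝓜(t) = ∫₀ᵗ M(s) ds. Then 𝓜(t) ≥ 𝓜(1)·t^σ for all 0 ≤ t ≤ 1. -/

import Mathlib

open Real MeasureTheory Set

/-!
Differentiating `𝓜 t / t ^ σ` gives `t ^ (σ - 1) (M t t - σ 𝓜 t) / t ^ (2σ) ≤ 0`, so this quotient
is antitone on `(0, ∞)`; comparing its values at `t ≤ 1` and at `1` is the claim.
-/

theorem hasDerivAt_integral_of_continuousOn_Ici {M : ℝ → ℝ} (hM : ContinuousOn M (Ici 0))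
    {x : ℝ} (hx : 0 < x) : HasDerivAt (fun s ↦ ∫ u in (0 : ℝ)..s, M u) (M x) x := by
  have hMpos : ContinuousOn M (Ioi 0) := hM.mono Ioi_subset_Ici_self
  refine intervalIntegral.integral_hasDerivAt_right ?_ ?_ ?_
  · exact (hM.mono fun y hy ↦ by rw [uIcc_of_le hx.le] at hy; exact hy.1).intervalIntegrable
  · exact hMpos.stronglyMeasurableAtFilter isOpen_Ioi x hx
  · exact hMpos.continuousAt (Ioi_mem_nhds hx)

theorem antitoneOn_div_rpow_of_deriv_mul_le {f f' : ℝ → ℝ} {σ : ℝ}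
    (hf : ∀ x, 0 < x → HasDerivAt f (f' x) x) (hle : ∀ x, 0 < x → f' x * x ≤ σ * f x) :
    AntitoneOn (fun x ↦ f x / x ^ σ) (Ioi 0) := by
  have hquot : ∀ x, 0 < x → HasDerivAt (fun x ↦ f x / x ^ σ)
      ((f' x * x ^ σ - f x * (σ * x ^ (σ - 1))) / (x ^ σ) ^ 2) x := fun x hx ↦
    (hf x hx).div (hasDerivAt_rpow_const (Or.inl hx.ne')) (rpow_pos_of_pos hx σ).ne'
  refine antitoneOn_of_deriv_nonpos (convex_Ioi 0)
    (fun x hx ↦ (hquot x hx).continuousAt.continuousWithinAt)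
    (fun x hx ↦ (hquot x (interior_subset hx)).differentiableAt.differentiableWithinAt)
    fun x hx ↦ ?_
  rw [interior_Ioi] at hx
  rw [(hquot x hx).deriv]
  refine div_nonpos_of_nonpos_of_nonneg ?_ (sq_nonneg _)
  have hsplit : x ^ σ = x ^ (σ - 1) * x := by rw [← rpow_add_one hx.ne', sub_add_cancel]
  have hnum : f' x * x ^ σ - f x * (σ * x ^ (σ - 1)) = x ^ (σ - 1) * (f' x * x - σ * f x) := by
    rw [hsplit]; ring
  rw [hnum]
  exact mul_nonpos_of_nonneg_of_nonpos (rpow_nonneg hx.le _) (sub_nonpos.2 (hle x hx))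

theorem stmt_3_general (M : ℝ → ℝ) (hMcont : ContinuousOn M (Set.Ici 0))
    (σ : ℝ) (hσ : 1 < σ)
    (𝓜 : ℝ → ℝ) (h𝓜 : ∀ t : ℝ, 𝓜 t = ∫ u in (0:ℝ)..t, M u)
    (hAR : ∀ t : ℝ, 0 ≤ t → σ * 𝓜 t ≥ M t * t) :
    ∀ t : ℝ, 0 ≤ t → t ≤ 1 → 𝓜 t ≥ 𝓜 1 * t ^ σ := by
  intro t ht ht1
  rcases ht.eq_or_lt with rfl | htpos
  · rw [zero_rpow (by linarith), mul_zero, h𝓜, intervalIntegral.integral_same]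
  have hderiv : ∀ x, 0 < x → HasDerivAt 𝓜 (M x) x := fun x hx ↦ by
    rw [funext h𝓜]; exact hasDerivAt_integral_of_continuousOn_Ici hMcont hx
  have hanti := antitoneOn_div_rpow_of_deriv_mul_le hderiv fun x hx ↦ hAR x hx.le
  have hcmp : 𝓜 1 / 1 ^ σ ≤ 𝓜 t / t ^ σ := hanti htpos (mem_Ioi.2 one_pos) ht1
  rwa [one_rpow, div_one, le_div_iff₀ (rpow_pos_of_pos htpos σ)] at hcmp

theorem stmt_3 (M : ℝ → ℝ) (hMcont : ContinuousOn M (Set.Ici 0))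
    (hMnonneg : ∀ t : ℝ, 0 ≤ t → 0 ≤ M t)
    (σ : ℝ) (hσ : 1 < σ)
    (𝓜 : ℝ → ℝ) (h𝓜 : ∀ t : ℝ, 𝓜 t = ∫ u in (0:ℝ)..t, M u)
    (hAR : ∀ t : ℝ, 0 ≤ t → σ * 𝓜 t ≥ M t * t) :
    ∀ t : ℝ, 0 ≤ t → t ≤ 1 → 𝓜 t ≥ 𝓜 1 * t ^ σ :=
  stmt_3_general M hMcont σ hσ 𝓜 h𝓜 hAR
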